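/- arXiv:1109.2543 — 2 statements merged into one kernel-verified Lean document; each statement's English description precedes it below -/
import Mathlib

section
/- Fix an integer K ≥ 2, a real ζ > 0, and a positive integer M. Let Λ = {X ∈ ℤ^K : Σ_{i=0}^{K−1} x_i = 0} and let β : V_r(0) → Λ be injective, where each X ∈ Λ is identified with the centroid-0 K-tuple (λ_0(X),…,λ_{K−1}(X)), λ_i(X) = Kζ·x_i + (2i−K+1)ζ/2. Extend β to a labeling α of the whole central quantizer A_c as follows: every λ ∈ A_c can be written uniquely as λ = λ_c + mζ with λ_c ∈ V_r(0) and m ∈ ℤ, and α(λ) is the K-tuple whose component in side quantizer A_{(m+i) mod K} is the point λ_i(β(λ_c)) + mζ, for i = 0,…,K−1. Then α : A_c → A_0 × A_1 × ⋯ × A_{K−1} is injective. -/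
/-!
The centroid of the tuple labelling `λ_c + mζ` is `mζ`: the offsets `(2i − K + 1)ζ/2` sum to zero,
and so do the coordinates of `β(λ_c)`. Hence the label determines `m`, then each coordinate of
`β(λ_c)`, and finally `λ_c` by injectivity of `β`. Each component lies in the right side quantizer
because raising the index of `A_i` by `m` moves its points by `mζ` modulo `Kζ`.
-/

open Finset Fin.CommRing

/-- The point `λ_t(x)` of the side quantizer `A_t`; the index is real so that shifting it is plain
arithmetic. -/
noncomputable def sidePoint (K : ℕ) (ζ t : ℝ) (x : ℤ) : ℝ := K * ζ * x + (2 * t - K + 1) * ζ / 2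

lemma sidePoint_add_mul_of_add_eq {K : ℕ} {ζ t s m : ℝ} {q : ℤ} (h : t + m = s + K * q) (x : ℤ) :
    sidePoint K ζ t x + m * ζ = sidePoint K ζ s (x + q) := by
  unfold sidePoint
  push_cast
  linear_combination ζ * h

lemma sidePoint_injective {K : ℕ} {ζ : ℝ} (hK : K ≠ 0) (hζ : ζ ≠ 0) (t : ℝ) :
    Function.Injective (sidePoint K ζ t) := by
  intro x y h
  have : (K * ζ : ℝ) * x = K * ζ * y := by unfold sidePoint at h; linarith
  exact_mod_cast mul_left_cancel₀ (by positivity) this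

lemma sum_range_two_mul_add_one (n : ℕ) : ∑ i ∈ range n, (2 * (i : ℝ) + 1) = n ^ 2 := by
  induction n with
  | zero => simp
  | succ n ih => rw [sum_range_succ, ih]; push_cast; ring

lemma sum_sidePoint {K : ℕ} (ζ : ℝ) (x : Fin K → ℤ) :
    ∑ i : Fin K, sidePoint K ζ i (x i) = K * ζ * ∑ i, (x i : ℝ) := by
  have h : ∑ i : Fin K, (2 * (i : ℝ) - K + 1) = 0 := by
    simp only [sub_add_eq_add_sub, sum_sub_distrib,
      Fin.sum_univ_eq_sum_range (fun i => 2 * (i : ℝ) + 1), sum_range_two_mul_add_one,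
      sum_const, card_univ, Fintype.card_fin, nsmul_eq_mul]
    ring
  simp only [sidePoint, sum_add_distrib, ← mul_sum, ← sum_div, ← sum_mul, h]
  ring

namespace Fin

variable {K : ℕ} [NeZero K]

lemma intCast_add_val (m : ℤ) (i : Fin K) : ((m + i : ℤ) : Fin K) = m + i := by
  push_cast [cast_val_eq_self]
  rfl

lemma exists_intCast_add_val_eq (m : ℤ) (j : Fin K) :
    ∃ i : Fin K, ∃ q : ℤ, ((m + i : ℤ) : Fin K) = j ∧ (i : ℤ) + m = j + K * q := by
  refine ⟨j - m, ?_⟩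
  have hj : ((m + (j - m : Fin K) : ℤ) : Fin K) = j := by rw [intCast_add_val]; abel
  have hmod : m + (j - m : Fin K) ≡ j [ZMOD K] := by
    rw [← CharP.intCast_eq_intCast (Fin K) K, hj]
    push_cast [cast_val_eq_self]
    rfl
  obtain ⟨q, hq⟩ := hmod.symm.dvd
  exact ⟨q, hj, by linarith⟩

end Fin

section Extension

variable {K : ℕ} [NeZero K]

def IsExtendedLabeling (ζ : ℝ) (V : Set ℝ) (β : ℝ → Fin K → ℤ) (α : ℝ → Fin K → ℝ) : Prop :=
  ∀ v ∈ V, ∀ m : ℤ, ∀ i : Fin K,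
    α (v + m * ζ) ((m + i : ℤ) : Fin K) = sidePoint K ζ i (β v i) + m * ζ

variable {ζ : ℝ} {A V : Set ℝ} {β : ℝ → Fin K → ℤ} {α : ℝ → Fin K → ℝ}

lemma IsExtendedLabeling.sum_eq (hα : IsExtendedLabeling ζ V β α)
    (hβ : ∀ v ∈ V, ∑ i, β v i = 0) {v : ℝ} (hv : v ∈ V) (m : ℤ) :
    ∑ j, α (v + m * ζ) j = K * (m * ζ) := by
  have hβ' : ∑ i, (β v i : ℝ) = 0 := by exact_mod_cast hβ v hv
  rw [← Equiv.sum_comp (Equiv.addLeft (m : Fin K))]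
  simp only [Equiv.coe_addLeft, ← Fin.intCast_add_val, hα v hv, sum_add_distrib, sum_sidePoint,
    hβ', sum_const, card_univ, Fintype.card_fin, nsmul_eq_mul]
  ring

lemma IsExtendedLabeling.exists_eq_sidePoint (hα : IsExtendedLabeling ζ V β α)
    (hA : ∀ v ∈ A, ∃ w ∈ V, ∃ m : ℤ, v = w + m * ζ) {v : ℝ} (hv : v ∈ A) (j : Fin K) :
    ∃ x : ℤ, α v j = sidePoint K ζ j x := by
  obtain ⟨w, hw, m, rfl⟩ := hA v hv
  obtain ⟨i, q, hij, hq⟩ := Fin.exists_intCast_add_val_eq m j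
  have hshift : sidePoint K ζ i (β w i) + m * ζ = sidePoint K ζ j (β w i + q) :=
    sidePoint_add_mul_of_add_eq (by exact_mod_cast hq) _
  exact ⟨β w i + q, by rw [← hshift, ← hα w hw m i, hij]⟩

lemma IsExtendedLabeling.injOn (hα : IsExtendedLabeling ζ V β α)
    (hA : ∀ v ∈ A, ∃ w ∈ V, ∃ m : ℤ, v = w + m * ζ) (hζ : ζ ≠ 0)
    (hβ0 : ∀ v ∈ V, ∑ i, β v i = 0) (hβ : Set.InjOn β V) :
    Set.InjOn α A := by
  intro v₁ hv₁ v₂ hv₂ h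
  obtain ⟨w₁, hw₁, m₁, rfl⟩ := hA v₁ hv₁
  obtain ⟨w₂, hw₂, m₂, rfl⟩ := hA v₂ hv₂
  obtain rfl : m₁ = m₂ := by
    have hsum := hα.sum_eq hβ0 hw₁ m₁
    rw [h, hα.sum_eq hβ0 hw₂ m₂] at hsum
    have hK : (K : ℝ) ≠ 0 := Nat.cast_ne_zero.2 (NeZero.ne K)
    exact_mod_cast (mul_right_cancel₀ hζ (mul_left_cancel₀ hK hsum)).symm
  have hw : β w₁ = β w₂ := funext fun i =>
    sidePoint_injective (NeZero.ne K) hζ _ <| add_right_cancel (b := m₁ * ζ) <| by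
      rw [← hα w₁ hw₁, ← hα w₂ hw₂, h]
  rw [hβ hw₁ hw₂ hw]

end Extension

noncomputable def centralQuantizer (ζ : ℝ) (M : ℕ) : Set ℝ :=
  {v : ℝ | ∃ y : ℤ, v = (ζ / M) * (y : ℝ) + (ζ / (2 * M)) * (((M + 1) % 2 : ℕ) : ℝ)}

namespace centralQuantizer

variable {ζ : ℝ} {M : ℕ}

lemma sub_intCast_mul_mem (hM : M ≠ 0) {v : ℝ} (hv : v ∈ centralQuantizer ζ M) (m : ℤ) :
    v - m * ζ ∈ centralQuantizer ζ M := by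
  obtain ⟨y, rfl⟩ := hv
  exact ⟨y - m * M, by push_cast; field_simp; ring⟩

lemma neg_half_not_mem (hζ : ζ ≠ 0) (hM : M ≠ 0) : -(ζ / 2) ∉ centralQuantizer ζ M := by
  -- in units of `ζ/(2M)` the points of `A_c` are the integers of parity `M + 1`, and `-(ζ/2)` is `-M`
  rintro ⟨y, hy⟩
  generalize hε : (M + 1) % 2 = ε at hy
  have hreal : (M : ℝ) + 2 * y + ε = 0 := by
    field_simp at hy
    linarith
  have hint : (M : ℤ) + 2 * y + ε = 0 := by exact_mod_cast hreal
  omega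

lemma exists_eq_add_of_mem (hζ : 0 < ζ) (hM : M ≠ 0) {v : ℝ} (hv : v ∈ centralQuantizer ζ M) :
    ∃ w ∈ centralQuantizer ζ M ∩ Set.Ioo (-(ζ / 2)) (ζ / 2), ∃ m : ℤ, v = w + m * ζ := by
  set m := toIcoDiv hζ (-(ζ / 2)) v
  have hmem := sub_intCast_mul_mem hM hv m
  have hIco : v - m * ζ ∈ Set.Ico (-(ζ / 2)) (ζ / 2) := by
    have := toIcoMod_mem_Ico hζ (-(ζ / 2)) v
    rwa [← self_sub_toIcoDiv_zsmul, zsmul_eq_mul, neg_add_eq_sub, sub_half] at this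
  refine ⟨v - m * ζ, ⟨hmem, lt_of_le_of_ne hIco.1 ?_, hIco.2⟩, m, by ring⟩
  intro h
  exact neg_half_not_mem hζ.ne' hM (h ▸ hmem)

end centralQuantizer

open Fin.CommRing in
theorem extended_labeling_injective_general
    (K : ℕ) [NeZero K] (ζ : ℝ) (hζ : 0 < ζ) (M : ℕ) (hM : 0 < M)
    (Ac Vr0 : Set ℝ)
    (hAc : Ac = {v : ℝ | ∃ y : ℤ,
        v = (ζ / M) * (y : ℝ) + (ζ / (2 * M)) * (((M + 1) % 2 : ℕ) : ℝ)})
    (hVr0 : Vr0 = Ac ∩ Set.Ioo (-(ζ / 2)) (ζ / 2))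
    (β : ℝ → (Fin K → ℤ))
    (hβ0 : ∀ v ∈ Vr0, ∑ i : Fin K, β v i = 0)
    (hβinj : Set.InjOn β Vr0)
    (α : ℝ → (Fin K → ℝ))
    (hα : ∀ v ∈ Vr0, ∀ m : ℤ, ∀ i : Fin K,
      α (v + (m : ℝ) * ζ) (((m + (i : ℤ)) : ℤ) : Fin K)
        = ((K : ℝ) * ζ * (β v i : ℝ) + (2 * (i : ℝ) - K + 1) * ζ / 2) + (m : ℝ) * ζ) :
    (∀ v ∈ Ac, ∀ j : Fin K, ∃ x : ℤ,
        α v j = (K : ℝ) * ζ * (x : ℝ) + (2 * (j : ℝ) - K + 1) * ζ / 2) ∧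
    Set.InjOn α Ac := by
  subst hAc hVr0
  have hdecomp (v : ℝ) (hv : v ∈ centralQuantizer ζ M) :=
    centralQuantizer.exists_eq_add_of_mem hζ hM.ne' hv
  exact ⟨fun v hv j => IsExtendedLabeling.exists_eq_sidePoint hα hdecomp hv j,
    IsExtendedLabeling.injOn hα hdecomp hζ.ne' hβ0 hβinj⟩

open Fin.CommRing in
/-- Injectivity of the extended labeling: an injective assignment `β` of the
central points in `V_r(0)` to centroid-0 coordinate vectors (points of `A_{K−1}`),
extended to all of `A_c` by the rule that the component of `α(λ_c + mζ)` in side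
quantizer `A_{(m+i) mod K}` is `λ_i(β(λ_c)) + mζ`, yields an injective labeling
`α : A_c → A_0 × ⋯ × A_{K−1}` (here `α v j ∈ A_j` for all `v ∈ A_c`). -/
theorem extended_labeling_injective
    (K : ℕ) (hK : 2 ≤ K) [NeZero K] (ζ : ℝ) (hζ : 0 < ζ) (M : ℕ) (hM : 0 < M)
    (Ac Vr0 : Set ℝ)
    (hAc : Ac = {v : ℝ | ∃ y : ℤ,
        v = (ζ / M) * (y : ℝ) + (ζ / (2 * M)) * (((M + 1) % 2 : ℕ) : ℝ)})
    (hVr0 : Vr0 = Ac ∩ Set.Ioo (-(ζ / 2)) (ζ / 2))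
    (β : ℝ → (Fin K → ℤ))
    (hβ0 : ∀ v ∈ Vr0, ∑ i : Fin K, β v i = 0)
    (hβinj : Set.InjOn β Vr0)
    (α : ℝ → (Fin K → ℝ))
    (hα : ∀ v ∈ Vr0, ∀ m : ℤ, ∀ i : Fin K,
      α (v + (m : ℝ) * ζ) (((m + (i : ℤ)) : ℤ) : Fin K)
        = ((K : ℝ) * ζ * (β v i : ℝ) + (2 * (i : ℝ) - K + 1) * ζ / 2) + (m : ℝ) * ζ) :
    (∀ v ∈ Ac, ∀ j : Fin K, ∃ x : ℤ,
        α v j = (K : ℝ) * ζ * (x : ℝ) + (2 * (j : ℝ) - K + 1) * ζ / 2) ∧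
    Set.InjOn α Ac :=
  extended_labeling_injective_general K ζ hζ M hM Ac Vr0 hAc hVr0 β hβ0 hβinj α hα
end

section
/- Fix integers K ≥ 2, a real ζ > 0, a positive integer M, and an integer κ with 1 ≤ κ < K. Let Λ = {X ∈ ℤ^K : Σ_i x_i = 0}; for X ∈ Λ write λ_i(X) = Kζ·x_i + (2i−K+1)ζ/2 and J(X) = Σ_{i=0}^{K−1} λ_i(X)² = K²ζ²‖X+s‖², where s_i = (2i−K+1)/(2K). Let μ_0 ≤ μ_1 ≤ μ_2 ≤ … be the nondecreasing enumeration of the multiset {J(X) : X ∈ Λ} (well defined because {X ∈ Λ : J(X) ≤ R} is finite for every R). Then for every injective map f : V_r(0) → Λ, Σ_{λ_c ∈ V_r(0)} Σ_{S ⊆ {0,…,K−1}, |S|=κ} (λ_c − (1/κ)·Σ_{j∈S} λ_j(f(λ_c)))² ≥ C(K,κ)·[ Σ_{λ_c ∈ V_r(0)} λ_c² + ((K−κ)/(K·κ·(K−1)))·Σ_{i=0}^{M−1} μ_i ], with equality whenever f is a bijection from V_r(0) onto a set of M vectors of Λ attaining the M smallest values of J. In particular, the optimal index assignment of the M central points of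 V_r(0) to centroid-0 K-tuples is achieved by any bijection onto the M tuples of smallest SSD cost, simultaneously for every κ < K. -/
/-!
For a centre point `v` and a tuple `λ` with centroid `0`, expand the cost
`∑_S (v - (1/κ) ∑_{j ∈ S} λ_j)²` over the `κ`-subsets `S`. The linear term vanishes because
every index lies in the same number `C(K-1, κ-1)` of subsets. For the quadratic term,
`∑_{j ∈ S} λ_j = -∑_{l ∉ S} λ_l` gives `(∑_{j ∈ S} λ_j)² = -∑_{j ∈ S, l ∉ S} λ_j λ_l`, and each
ordered pair `j ≠ l` is split by exactly `C(K-2, κ-1)` subsets, so the quadratic term is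
`C(K-2, κ-1) ∑_j λ_j²`. Hence the cost of `v` is `C(K,κ) (v² + (K-κ)/(Kκ(K-1)) J(f v))`, and it
remains to see that `M` distinct points of `Λ` have total SSD cost at least `μ_0 + ⋯ + μ_{M-1}`.
-/

open Finset

namespace Finset

variable {α : Type*} [DecidableEq α] {s : Finset α} {k : ℕ}

theorem card_filter_mem_powersetCard {a : α} (ha : a ∈ s) (hk : 1 ≤ k) :
    #{S ∈ s.powersetCard k | a ∈ S} = (#s - 1).choose (k - 1) := by
  simpa using card_filter_powersetCard_subset {a} s k (by simpa) (by simpa)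

theorem card_filter_mem_notMem_powersetCard {a b : α} (ha : a ∈ s) (hb : b ∈ s) (hab : a ≠ b)
    (hk : 1 ≤ k) : #{S ∈ s.powersetCard k | a ∈ S ∧ b ∉ S} = (#s - 2).choose (k - 1) := by
  have : {S ∈ s.powersetCard k | a ∈ S ∧ b ∉ S} = {S ∈ (s.erase b).powersetCard k | a ∈ S} := by
    ext S
    simp only [mem_filter, mem_powersetCard, subset_erase]
    tauto
  rw [this, card_filter_mem_powersetCard (mem_erase.2 ⟨hab, ha⟩) hk, card_erase_of_mem hb]
  rfl

theorem sum_powersetCard_sum {M : Type*} [AddCommMonoid M] (hk : 1 ≤ k) (g : α → M) :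
    ∑ S ∈ s.powersetCard k, ∑ j ∈ S, g j = (#s - 1).choose (k - 1) • ∑ j ∈ s, g j := by
  calc ∑ S ∈ s.powersetCard k, ∑ j ∈ S, g j
      = ∑ S ∈ s.powersetCard k, ∑ j ∈ s, if j ∈ S then g j else 0 := by
        refine sum_congr rfl fun S hS => ?_
        rw [sum_ite_mem, inter_eq_right.2 (mem_powersetCard.1 hS).1]
    _ = ∑ j ∈ s, #{S ∈ s.powersetCard k | j ∈ S} • g j := by
        rw [sum_comm]
        exact sum_congr rfl fun j _ => by rw [← sum_filter, sum_const]
    _ = (#s - 1).choose (k - 1) • ∑ j ∈ s, g j := by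
        rw [smul_sum]
        exact sum_congr rfl fun j hj => by rw [card_filter_mem_powersetCard hj hk]

theorem sq_sum_eq_neg_sum_sum_of_sum_eq_zero {R : Type*} [CommRing R] {L : α → R}
    (hL : ∑ j ∈ s, L j = 0) {S : Finset α} (hS : S ⊆ s) :
    (∑ j ∈ S, L j) ^ 2 = -∑ j ∈ s, ∑ l ∈ s, if j ∈ S ∧ l ∉ S then L j * L l else 0 := by
  have hcompl : ∑ l ∈ s \ S, L l = -∑ j ∈ S, L j := by
    rw [eq_neg_iff_add_eq_zero, sum_sdiff hS, hL]
  have hin : ∑ j ∈ S, L j = ∑ j ∈ s, if j ∈ S then L j else 0 := by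
    rw [sum_ite_mem, inter_eq_right.2 hS]
  have hout : ∑ l ∈ s \ S, L l = ∑ l ∈ s, if l ∉ S then L l else 0 := by
    rw [sdiff_eq_filter, sum_filter]
  simp_rw [← ite_zero_mul_ite_zero, ← sum_mul_sum, ← hin, ← hout, hcompl]
  ring

theorem sum_powersetCard_sq_sum_of_sum_eq_zero {R : Type*} [CommRing R] (hk : 1 ≤ k)
    {L : α → R} (hL : ∑ j ∈ s, L j = 0) :
    ∑ S ∈ s.powersetCard k, (∑ j ∈ S, L j) ^ 2
      = ((#s - 2).choose (k - 1) : R) * ∑ j ∈ s, L j ^ 2 := by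
  set c : R := ((#s - 2).choose (k - 1) : R)
  have hcount : ∀ j ∈ s, ∀ l ∈ s, #{S ∈ s.powersetCard k | j ∈ S ∧ l ∉ S} • (L j * L l)
      = c * (L j * L l) - if j = l then c * (L j * L l) else 0 := by
    intro j hj l hl
    by_cases hjl : j = l
    · subst hjl
      simp
    · rw [card_filter_mem_notMem_powersetCard hj hl hjl hk, if_neg hjl, nsmul_eq_mul, sub_zero]
  calc ∑ S ∈ s.powersetCard k, (∑ j ∈ S, L j) ^ 2
      = -∑ S ∈ s.powersetCard k, ∑ j ∈ s, ∑ l ∈ s, if j ∈ S ∧ l ∉ S then L j * L l else 0 := by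
        rw [← sum_neg_distrib]
        exact sum_congr rfl fun S hS =>
          sq_sum_eq_neg_sum_sum_of_sum_eq_zero hL (mem_powersetCard.1 hS).1
    _ = -∑ j ∈ s, ∑ l ∈ s, #{S ∈ s.powersetCard k | j ∈ S ∧ l ∉ S} • (L j * L l) := by
        rw [sum_comm]
        congr 1
        refine sum_congr rfl fun j _ => ?_
        rw [sum_comm]
        exact sum_congr rfl fun l _ => by rw [← sum_filter, sum_const]
    _ = c * ∑ j ∈ s, L j ^ 2 := by
        simp_rw +contextual [hcount, sum_sub_distrib, sum_ite_eq, if_true, ← mul_sum, ← sum_mul, hL]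
        simp [mul_sum, sq]

end Finset

namespace Nat

theorem choose_sub_two_mul_eq {n k : ℕ} (hn : 2 ≤ n) (hk : 1 ≤ k) :
    (n - 2).choose (k - 1) * (n * (n - 1)) = n.choose k * (k * (n - k)) := by
  obtain ⟨m, rfl⟩ := Nat.exists_eq_add_of_le' hn
  obtain ⟨j, rfl⟩ := Nat.exists_eq_add_of_le' hk
  have h₁ := choose_mul_succ_eq m j
  have h₂ := add_one_mul_choose_eq (m + 1) j
  simp only [Nat.add_sub_cancel, show m + 2 - 1 = m + 1 by omega,
    show m + 2 - (j + 1) = m + 1 - j by omega]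
  calc m.choose j * ((m + 2) * (m + 1)) = (m + 2) * (m.choose j * (m + 1)) := by ring
    _ = (m + 2) * (m + 1).choose j * (m + 1 - j) := by rw [h₁, mul_assoc]
    _ = _ := by rw [h₂]; ring

end Nat

theorem Monotone.sum_range_card_le_sum {N : Type*} [AddCommMonoid N] [PartialOrder N]
    [IsOrderedAddMonoid N] {μ : ℕ → N} (hμ : Monotone μ) (T : Finset ℕ) :
    ∑ i ∈ range #T, μ i ≤ ∑ i ∈ T, μ i := by
  set r := range #T
  -- Exchange argument: `r \ T` and `T \ r` have the same size, and `r \ T < #T ≤ T \ r`.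
  calc ∑ i ∈ r, μ i ≤ ∑ i ∈ r ∩ T, μ i + #(r \ T) • μ #T := by
        grw [← sum_inter_add_sum_sdiff r T, ← sum_le_card_nsmul _ _ _ fun x hx ↦ ?_]
        exact hμ (mem_range.1 (mem_sdiff.1 hx).1).le
    _ = ∑ i ∈ T ∩ r, μ i + #(T \ r) • μ #T := by
        rw [inter_comm, card_sdiff_comm (by simp [r])]
    _ ≤ ∑ i ∈ T, μ i := by
        grw [← sum_inter_add_sum_sdiff T r, card_nsmul_le_sum _ _ _ fun x hx ↦ ?_]
        exact hμ (by simpa [r] using (mem_sdiff.1 hx).2)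

theorem Monotone.sum_range_card_le_sum_of_injOn {β γ : Type*} {p : γ → Prop} {μ : ℕ → ℝ}
    (hmono : Monotone μ) (e : ℕ ≃ Subtype p) {J : γ → ℝ} (hμ : ∀ n, μ n = J (e n))
    {V : Finset β} {f : β → γ} (hf : ∀ v ∈ V, p (f v)) (hinj : Set.InjOn f V) :
    ∑ i ∈ range #V, μ i ≤ ∑ v ∈ V, J (f v) := by
  let g : V → ℕ := fun v => e.symm ⟨f v, hf v v.2⟩
  have hg : Function.Injective g := fun v w h =>
    Subtype.ext (hinj v.2 w.2 (congrArg Subtype.val (e.symm.injective h)))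
  calc ∑ i ∈ range #V, μ i = ∑ i ∈ range #(univ.image g), μ i := by
        rw [card_image_of_injective _ hg, card_univ, Fintype.card_coe]
    _ ≤ ∑ i ∈ univ.image g, μ i := hmono.sum_range_card_le_sum _
    _ = ∑ v ∈ V, J (f v) := by
        rw [sum_image fun x _ y _ h => hg h, ← sum_coe_sort V]
        simp [g, hμ]

theorem Fin.sum_two_mul_sub_add_one (K : ℕ) : ∑ i : Fin K, (2 * (i : ℝ) - K + 1) = 0 := by
  have hrev : ∀ i : Fin K, 2 * (i.rev : ℝ) - K + 1 = -(2 * (i : ℝ) - K + 1) := by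
    intro i
    rw [Fin.val_rev, Nat.cast_sub (by omega)]
    push_cast
    ring
  have := Equiv.sum_comp Fin.revPerm (fun i : Fin K => 2 * (i : ℝ) - K + 1)
  simp only [Fin.revPerm_apply, hrev, sum_neg_distrib] at this
  linarith

theorem sum_powersetCard_sq_sub_mean_of_sum_eq_zero {ι : Type*} [Fintype ι] [DecidableEq ι]
    {κ : ℕ} (hκ : 1 ≤ κ) (hκn : κ < Fintype.card ι) {L : ι → ℝ} (hL : ∑ i, L i = 0) (v : ℝ) :
    ∑ S ∈ univ.powersetCard κ, (v - (1 / (κ : ℝ)) * ∑ j ∈ S, L j) ^ 2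
      = ((Fintype.card ι).choose κ : ℝ) * (v ^ 2 + ((Fintype.card ι - κ : ℝ)
          / ((Fintype.card ι : ℝ) * κ * (Fintype.card ι - 1))) * ∑ i, L i ^ 2) := by
  have hlin : ∑ S ∈ univ.powersetCard κ, ∑ j ∈ S, L j = 0 := by
    rw [sum_powersetCard_sum hκ, hL, smul_zero]
  have hsq := sum_powersetCard_sq_sum_of_sum_eq_zero (s := univ) hκ hL
  simp only [sub_sq, mul_pow, sum_add_distrib, sum_sub_distrib, ← mul_sum, sum_const,
    card_powersetCard, card_univ, nsmul_eq_mul, hlin, hsq]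
  generalize Fintype.card ι = n at hκn ⊢
  have hchoose : ((n - 2).choose (κ - 1) : ℝ) * (n * (n - 1)) = n.choose κ * (κ * (n - κ)) := by
    have := congrArg (Nat.cast : ℕ → ℝ) (Nat.choose_sub_two_mul_eq (n := n) (by omega) hκ)
    push_cast [Nat.cast_sub (by omega : 1 ≤ n), Nat.cast_sub hκn.le] at this
    exact this
  have hn : (n : ℝ) - 1 ≠ 0 := by
    rw [sub_ne_zero]; exact_mod_cast (by omega : n ≠ 1)
  have hn0 : (n : ℝ) ≠ 0 := by exact_mod_cast (by omega : n ≠ 0)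
  have hκ0 : (κ : ℝ) ≠ 0 := by positivity
  field_simp
  linear_combination (∑ i, L i ^ 2) * hchoose

theorem sum_side_points_eq_zero {K : ℕ} (ζ : ℝ) {X : Fin K → ℤ} (hX : ∑ i, X i = 0) :
    ∑ i : Fin K, ((K : ℝ) * ζ * (X i : ℝ) + (2 * (i : ℝ) - K + 1) * ζ / 2) = 0 := by
  have hX' : ∑ i, (X i : ℝ) = 0 := by exact_mod_cast hX
  rw [sum_add_distrib, ← mul_sum, ← sum_div, ← sum_mul, hX', Fin.sum_two_mul_sub_add_one]
  ring

theorem optimal_index_assignment_general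
    (K : ℕ) (ζ : ℝ) (hζ : 0 < ζ) (M : ℕ) (hM : 0 < M)
    (κ : ℕ) (hκ1 : 1 ≤ κ) (hκK : κ < K)
    (lam : (Fin K → ℤ) → Fin K → ℝ)
    (hlam : ∀ X : Fin K → ℤ, ∀ i : Fin K,
      lam X i = (K : ℝ) * ζ * (X i : ℝ) + (2 * (i : ℝ) - K + 1) * ζ / 2)
    (J : (Fin K → ℤ) → ℝ) (hJ : ∀ X, J X = ∑ i : Fin K, (lam X i) ^ 2)
    (e : ℕ ≃ {X : Fin K → ℤ // ∑ i : Fin K, X i = 0})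
    (μ : ℕ → ℝ) (hμ : ∀ n, μ n = J (e n).1) (hmono : Monotone μ)
    (Vr0 : Finset ℝ)
    (hVr0 : Vr0 = (Finset.range M).image
        (fun k : ℕ => ζ * (2 * (k : ℝ) - M + 1) / (2 * M)))
    (f : ℝ → (Fin K → ℤ))
    (hf0 : ∀ v ∈ Vr0, ∑ i : Fin K, f v i = 0)
    (hfinj : Set.InjOn f Vr0) :
    (∑ v ∈ Vr0, ∑ S ∈ Finset.univ.powersetCard κ,
          (v - (1 / (κ : ℝ)) * ∑ j ∈ S, lam (f v) j) ^ 2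
        ≥ (K.choose κ : ℝ) * ((∑ v ∈ Vr0, v ^ 2)
            + ((K - κ : ℝ) / ((K : ℝ) * κ * (K - 1))) * ∑ i ∈ Finset.range M, μ i)) ∧
    (Vr0.val.map (fun v => J (f v)) = (Multiset.range M).map μ →
      ∑ v ∈ Vr0, ∑ S ∈ Finset.univ.powersetCard κ,
          (v - (1 / (κ : ℝ)) * ∑ j ∈ S, lam (f v) j) ^ 2
        = (K.choose κ : ℝ) * ((∑ v ∈ Vr0, v ^ 2)
            + ((K - κ : ℝ) / ((K : ℝ) * κ * (K - 1))) * ∑ i ∈ Finset.range M, μ i)) := by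
  have hcost : ∀ v ∈ Vr0,
      ∑ S ∈ univ.powersetCard κ, (v - (1 / (κ : ℝ)) * ∑ j ∈ S, lam (f v) j) ^ 2
        = (K.choose κ : ℝ) * (v ^ 2 + ((K - κ : ℝ) / ((K : ℝ) * κ * (K - 1))) * J (f v)) := by
    intro v hv
    have hlam0 : ∑ i, lam (f v) i = 0 := by
      simpa only [hlam] using sum_side_points_eq_zero ζ (hf0 v hv)
    rw [hJ]
    simpa using sum_powersetCard_sq_sub_mean_of_sum_eq_zero hκ1 (by simpa using hκK) hlam0 v
  have hcard : #Vr0 = M := by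
    rw [hVr0, card_image_of_injective, card_range]
    intro k k' h
    have h' := mul_left_cancel₀ hζ.ne' ((div_left_inj' (by positivity)).1 h)
    exact_mod_cast (by linarith : (k : ℝ) = k')
  have hJμ : ∑ i ∈ range M, μ i ≤ ∑ v ∈ Vr0, J (f v) :=
    hcard ▸ hmono.sum_range_card_le_sum_of_injOn e hμ hf0 hfinj
  have hα : 0 ≤ (K - κ : ℝ) / ((K : ℝ) * κ * (K - 1)) := by
    have : (κ : ℝ) + 1 ≤ K := by exact_mod_cast hκK
    exact div_nonneg (by linarith) (mul_nonneg (by positivity) (by linarith))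
  rw [sum_congr rfl hcost, ← mul_sum, sum_add_distrib, ← mul_sum]
  refine ⟨by gcongr, fun hmap => ?_⟩
  rw [show ∑ v ∈ Vr0, J (f v) = ∑ i ∈ range M, μ i by simp [Finset.sum, hmap]]

/-- Optimality of the index assignment of the `M` central points of `V_r(0)` to
centroid-0 K-tuples: for every injective `f : V_r(0) → Λ` (with
`Λ = {X ∈ ℤ^K : Σ_i x_i = 0}`), the total labeling cost for `κ < K` received
descriptions is at least
`C(K,κ)·(Σ_{λ_c} λ_c² + ((K−κ)/(Kκ(K−1)))·Σ_{i<M} μ_i)`, where `μ` is the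
nondecreasing enumeration of the multiset of SSD costs `{J(X) : X ∈ Λ}`;
equality holds whenever the image of `f` attains the `M` smallest values of `J`. -/
theorem optimal_index_assignment
    (K : ℕ) (hK : 2 ≤ K) (ζ : ℝ) (hζ : 0 < ζ) (M : ℕ) (hM : 0 < M)
    (κ : ℕ) (hκ1 : 1 ≤ κ) (hκK : κ < K)
    (lam : (Fin K → ℤ) → Fin K → ℝ)
    (hlam : ∀ X : Fin K → ℤ, ∀ i : Fin K,
      lam X i = (K : ℝ) * ζ * (X i : ℝ) + (2 * (i : ℝ) - K + 1) * ζ / 2)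
    (J : (Fin K → ℤ) → ℝ) (hJ : ∀ X, J X = ∑ i : Fin K, (lam X i) ^ 2)
    (e : ℕ ≃ {X : Fin K → ℤ // ∑ i : Fin K, X i = 0})
    (μ : ℕ → ℝ) (hμ : ∀ n, μ n = J (e n).1) (hmono : Monotone μ)
    (Vr0 : Finset ℝ)
    (hVr0 : Vr0 = (Finset.range M).image
        (fun k : ℕ => ζ * (2 * (k : ℝ) - M + 1) / (2 * M)))
    (f : ℝ → (Fin K → ℤ))
    (hf0 : ∀ v ∈ Vr0, ∑ i : Fin K, f v i = 0)
    (hfinj : Set.InjOn f Vr0) :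
    (∑ v ∈ Vr0, ∑ S ∈ Finset.univ.powersetCard κ,
          (v - (1 / (κ : ℝ)) * ∑ j ∈ S, lam (f v) j) ^ 2
        ≥ (K.choose κ : ℝ) * ((∑ v ∈ Vr0, v ^ 2)
            + ((K - κ : ℝ) / ((K : ℝ) * κ * (K - 1))) * ∑ i ∈ Finset.range M, μ i)) ∧
    (Vr0.val.map (fun v => J (f v)) = (Multiset.range M).map μ →
      ∑ v ∈ Vr0, ∑ S ∈ Finset.univ.powersetCard κ,
          (v - (1 / (κ : ℝ)) * ∑ j ∈ S, lam (f v) j) ^ 2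
        = (K.choose κ : ℝ) * ((∑ v ∈ Vr0, v ^ 2)
            + ((K - κ : ℝ) / ((K : ℝ) * κ * (K - 1))) * ∑ i ∈ Finset.range M, μ i)) :=
  optimal_index_assignment_general K ζ hζ M hM κ hκ1 hκK lam hlam J hJ e μ hμ hmono Vr0 hVr0 f hf0
    hfinj
end
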